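/- Let X be a complete metric space and G_0, G_1 : X → X be 1/2-Lipschitz maps. For each a ∈ Σ (one-sided boolean sequences), the sequence x_k(a) := fixed point of G_{a_0}∘⋯∘G_{a_k} is Cauchy, so the limit H(a) := lim_k x_k(a) exists; moreover the resulting map H : Σ → X is continuous and satisfies the conjugacy H(σ_i a) = G_i(H(a)) for i = 0,1. -/

import Mathlib

def compWord {X : Type*} (G : Bool → X → X) (w : List Bool) : X → X :=
  w.foldr (fun i f => G i ∘ f) id

def prependSymb (i : Bool) (a : ℕ → Bool) : ℕ → Bool :=
  fun k => match k with
  | 0 => i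
  | n + 1 => a n

/-!
All the fixed points `x a k` lie in one closed bounded set `s` (a large ball) mapped into itself
by both `G i`. A point `G_{a_0} ∘ ⋯ ∘ G_{a_{n-1}} y` with `y ∈ s` is determined up to
`2⁻ⁿ · diam s` by the first `n` symbols of `a`, and `x a k` is such a point for every
`n ≤ k + 1`. This makes `k ↦ x a k` Cauchy, passes to the limits (so `H` is continuous for the
product topology), and gives the conjugacy because `G i (x a k)` and `x (σ_i a) (k + 1)` are both
such points for the word `i, a 0, …, a k`.
-/

open Function Set Metric Filter Topology
open scoped NNReal

section Words

variable {X : Type*} (G : Bool → X → X)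

@[simp]
lemma compWord_nil : compWord G [] = id := rfl

@[simp]
lemma compWord_cons (i : Bool) (w : List Bool) : compWord G (i :: w) = G i ∘ compWord G w := rfl

lemma compWord_append (v w : List Bool) :
    compWord G (v ++ w) = compWord G v ∘ compWord G w := by
  induction v with
  | nil => rfl
  | cons i v ih => simp only [List.cons_append, compWord_cons, ih, comp_assoc]

variable {G}

lemma LipschitzWith.compWord [PseudoEMetricSpace X] {K : ℝ≥0}
    (hG : ∀ i, LipschitzWith K (G i)) (w : List Bool) :
    LipschitzWith (K ^ w.length) (compWord G w) := by
  induction w with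
  | nil => simpa using LipschitzWith.id
  | cons i w ih => simpa [pow_succ'] using (hG i).comp ih

lemma Set.MapsTo.compWord {s : Set X} (hG : ∀ i, MapsTo (G i) s s) (w : List Bool) :
    MapsTo (compWord G w) s s := by
  induction w with
  | nil => exact mapsTo_id s
  | cons i w ih => exact (hG i).comp ih

lemma compWord_mem_image_of_isPrefix {s : Set X} (hG : ∀ i, MapsTo (G i) s s)
    {v w : List Bool} (hvw : v <+: w) {y : X} (hy : y ∈ s) :
    compWord G w y ∈ compWord G v '' s := by
  obtain ⟨t, rfl⟩ := hvw
  rw [compWord_append]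
  exact mem_image_of_mem _ (MapsTo.compWord hG t hy)

end Words

section Prefix

variable {α : Type*} (a : ℕ → α)

def prefixWord (n : ℕ) : List α := List.ofFn fun j : Fin n => a j

@[simp]
lemma length_prefixWord (n : ℕ) : (prefixWord a n).length = n := List.length_ofFn

lemma prefixWord_succ (n : ℕ) : prefixWord a (n + 1) = prefixWord a n ++ [a n] := by
  rw [prefixWord, List.ofFn_succ', List.concat_eq_append]; rfl

lemma prefixWord_isPrefix {m n : ℕ} (h : m ≤ n) : prefixWord a m <+: prefixWord a n := by
  induction n, h using Nat.le_induction with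
  | base => exact List.prefix_refl _
  | succ n _ ih => exact ih.trans (prefixWord_succ a n ▸ List.prefix_append _ _)

lemma prefixWord_eq_of_mem_cylinder {a b : ℕ → α} {n : ℕ} (h : b ∈ PiNat.cylinder a n) :
    prefixWord b n = prefixWord a n :=
  List.ofFn_inj.2 <| funext fun j => PiNat.mem_cylinder_iff.1 h j j.isLt

lemma prefixWord_prependSymb (i : Bool) (a : ℕ → Bool) (n : ℕ) :
    prefixWord (prependSymb i a) (n + 1) = i :: prefixWord a n := by
  simp [prefixWord, List.ofFn_succ, prependSymb]

end Prefix

section Metric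

variable {X : Type*} [MetricSpace X]

lemma exists_isClosed_isBounded_mapsTo {ι : Type*} [Finite ι] {G : ι → X → X}
    {K : ℝ≥0} (hG : ∀ i, LipschitzWith K (G i)) (hK : K < 1) (z : X) :
    ∃ s : Set X, IsClosed s ∧ Bornology.IsBounded s ∧ z ∈ s ∧ ∀ i, MapsTo (G i) s s := by
  obtain ⟨R, hR⟩ := Finite.exists_le fun i => dist (G i z) z / (1 - K)
  have hK' : (0 : ℝ) < 1 - K := sub_pos.2 hK
  refine ⟨closedBall z (max R 0), isClosed_closedBall, isBounded_closedBall,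
    mem_closedBall_self (le_max_right _ _), fun i y hy => ?_⟩
  rw [mem_closedBall] at hy ⊢
  have hGz : dist (G i z) z ≤ (1 - K) * max R 0 :=
    (div_le_iff₀' hK').1 ((hR i).trans (le_max_left _ _))
  calc dist (G i y) z ≤ dist (G i y) (G i z) + dist (G i z) z := dist_triangle _ _ _
    _ ≤ K * max R 0 + (1 - K) * max R 0 := by
      gcongr
      exact ((hG i).dist_le_mul y z).trans (by gcongr)
    _ = max R 0 := by ring

lemma ContractingWith.mem_of_isFixedPt [CompleteSpace X] {f : X → X} {K : ℝ≥0}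
    (hf : ContractingWith K f) {s : Set X} (hs : IsClosed s) (hfs : MapsTo f s s) {z : X}
    (hz : z ∈ s) {x : X} (hx : IsFixedPt f x) : x ∈ s := by
  have : Nonempty X := ⟨z⟩
  rw [hf.fixedPoint_unique hx]
  exact hs.mem_of_tendsto (hf.tendsto_iterate_fixedPoint z)
    (Eventually.of_forall fun n => hfs.iterate n hz)

lemma tendsto_pow_mul_const_nhds_zero {K : ℝ≥0} (hK : K < 1) (C : ℝ) :
    Tendsto (fun n : ℕ => (K : ℝ) ^ n * C) atTop (𝓝 0) := by
  simpa using (tendsto_pow_atTop_nhds_zero_of_lt_one K.2 hK).mul_const C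

variable {G : Bool → X → X} {K : ℝ≥0} {s : Set X}

lemma dist_le_of_mem_image_compWord (hG : ∀ i, LipschitzWith K (G i))
    (hs : Bornology.IsBounded s)
    {w : List Bool} {p q : X} (hp : p ∈ compWord G w '' s) (hq : q ∈ compWord G w '' s) :
    dist p q ≤ K ^ w.length * diam s := by
  obtain ⟨p, hp, rfl⟩ := hp
  obtain ⟨q, hq, rfl⟩ := hq
  calc dist (compWord G w p) (compWord G w q) ≤ ↑(K ^ w.length) * dist p q :=
        (LipschitzWith.compWord hG w).dist_le_mul p q
    _ ≤ K ^ w.length * diam s := by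
        push_cast
        gcongr
        exact dist_le_diam_of_mem hs hp hq

lemma IsFixedPt.mem_image_compWord [CompleteSpace X] (hG : ∀ i, LipschitzWith K (G i))
    (hK : K < 1) (hs : IsClosed s) (hGs : ∀ i, MapsTo (G i) s s) {z : X} (hz : z ∈ s)
    {w : List Bool} (hw : w ≠ []) {y : X} (hy : IsFixedPt (compWord G w) y)
    {v : List Bool} (hv : v <+: w) : y ∈ compWord G v '' s := by
  have hcontr : ContractingWith (K ^ w.length) (compWord G w) :=
    ⟨pow_lt_one₀ K.2 hK (List.length_pos_iff.2 hw).ne', LipschitzWith.compWord hG w⟩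
  rw [← hy.eq]
  exact compWord_mem_image_of_isPrefix hGs hv
    (hcontr.mem_of_isFixedPt hs (MapsTo.compWord hGs w) hz hy)

variable {x : (ℕ → Bool) → ℕ → X}

lemma dist_le_of_mem_cylinder (hG : ∀ i, LipschitzWith K (G i)) (hs : Bornology.IsBounded s)
    (hx : ∀ a k n, n ≤ k + 1 → x a k ∈ compWord G (prefixWord a n) '' s)
    {a b : ℕ → Bool} {n k l : ℕ} (hab : b ∈ PiNat.cylinder a n) (hk : n ≤ k + 1)
    (hl : n ≤ l + 1) : dist (x a k) (x b l) ≤ K ^ n * diam s := by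
  have hb := hx b l n hl
  rw [prefixWord_eq_of_mem_cylinder hab] at hb
  simpa using dist_le_of_mem_image_compWord hG hs (hx a k n hk) hb

lemma cauchySeq_of_mem_image_compWord (hG : ∀ i, LipschitzWith K (G i)) (hK : K < 1)
    (hs : Bornology.IsBounded s)
    (hx : ∀ a k n, n ≤ k + 1 → x a k ∈ compWord G (prefixWord a n) '' s)
    (a : ℕ → Bool) : CauchySeq (x a) :=
  cauchySeq_of_le_tendsto_0 (fun n => (K : ℝ) ^ n * diam s)
    (fun _ _ _ hk hl => dist_le_of_mem_cylinder hG hs hx (PiNat.self_mem_cylinder a _)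
      (by omega) (by omega))
    (tendsto_pow_mul_const_nhds_zero hK _)

variable {H : (ℕ → Bool) → X}

lemma dist_le_of_tendsto_of_mem_cylinder (hG : ∀ i, LipschitzWith K (G i))
    (hs : Bornology.IsBounded s)
    (hx : ∀ a k n, n ≤ k + 1 → x a k ∈ compWord G (prefixWord a n) '' s)
    (hH : ∀ a, Tendsto (x a) atTop (𝓝 (H a))) {a b : ℕ → Bool} {n : ℕ}
    (hab : b ∈ PiNat.cylinder a n) : dist (H a) (H b) ≤ K ^ n * diam s :=
  le_of_tendsto ((hH a).dist (hH b)) <| eventually_atTop.2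
    ⟨n, fun k hk => dist_le_of_mem_cylinder hG hs hx hab (by omega) (by omega)⟩

lemma continuous_of_tendsto (hG : ∀ i, LipschitzWith K (G i)) (hK : K < 1)
    (hs : Bornology.IsBounded s)
    (hx : ∀ a k n, n ≤ k + 1 → x a k ∈ compWord G (prefixWord a n) '' s)
    (hH : ∀ a, Tendsto (x a) atTop (𝓝 (H a))) : Continuous H := by
  refine continuous_iff_continuousAt.2 fun a => Metric.tendsto_nhds.2 fun ε hε => ?_
  obtain ⟨n, hn⟩ := ((tendsto_pow_mul_const_nhds_zero hK (diam s)).eventually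
    (gt_mem_nhds hε)).exists
  filter_upwards [(PiNat.isOpen_cylinder (E := fun _ => Bool) a n).mem_nhds
    (PiNat.self_mem_cylinder a n)] with b hb
  rw [dist_comm]
  exact (dist_le_of_tendsto_of_mem_cylinder hG hs hx hH hb).trans_lt hn

lemma apply_prependSymb_eq_of_tendsto (hG : ∀ i, LipschitzWith K (G i)) (hK : K < 1)
    (hs : Bornology.IsBounded s)
    (hx : ∀ a k n, n ≤ k + 1 → x a k ∈ compWord G (prefixWord a n) '' s)
    (hH : ∀ a, Tendsto (x a) atTop (𝓝 (H a))) (i : Bool) (a : ℕ → Bool) :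
    H (prependSymb i a) = G i (H a) := by
  have hclose : ∀ k,
      dist (G i (x a k)) (x (prependSymb i a) (k + 1)) ≤ K ^ (k + 2) * diam s := by
    intro k
    have h1 : G i (x a k) ∈ compWord G (i :: prefixWord a (k + 1)) '' s := by
      rw [compWord_cons, image_comp]
      exact mem_image_of_mem _ (hx a k (k + 1) le_rfl)
    have h2 := hx (prependSymb i a) (k + 1) (k + 2) le_rfl
    rw [prefixWord_prependSymb] at h2
    simpa using dist_le_of_mem_image_compWord hG hs h1 h2
  have hGa : Tendsto (fun k => x (prependSymb i a) (k + 1)) atTop (𝓝 (G i (H a))) :=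
    (((hG i).continuous.tendsto _).comp (hH a)).congr_dist <| squeeze_zero
      (fun _ => dist_nonneg) hclose ((tendsto_pow_mul_const_nhds_zero hK _).comp
        (tendsto_add_atTop_nat 2))
  exact tendsto_nhds_unique ((hH _).comp (tendsto_add_atTop_nat 1)) hGa

end Metric

/-- Let `G_0, G_1 : X → X` be `1/2`-Lipschitz maps of a complete metric space.
If `x a k` denotes a fixed point of `G_{a_0} ∘ ⋯ ∘ G_{a_k}`, then for each
boolean sequence `a` the sequence `k ↦ x a k` is Cauchy; the limit `H a`
exists, `H` is continuous (w.r.t. the product topology on `ℕ → Bool`, which is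
the topology of the metric `d`), and `H (σ_i a) = G_i (H a)`. -/
theorem conjugacy_map_exists {X : Type*} [MetricSpace X] [CompleteSpace X]
    [Nonempty X] (G : Bool → X → X)
    (hG : ∀ i : Bool, ∀ x y : X, dist (G i x) (G i y) ≤ (1 / 2) * dist x y)
    (x : (ℕ → Bool) → ℕ → X)
    (hx : ∀ (a : ℕ → Bool) (k : ℕ),
      compWord G (List.ofFn fun j : Fin (k + 1) => a j) (x a k) = x a k) :
    (∀ a : ℕ → Bool, CauchySeq (x a)) ∧
    ∃ H : (ℕ → Bool) → X,
      Continuous H ∧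
      (∀ a : ℕ → Bool, Filter.Tendsto (x a) Filter.atTop (nhds (H a))) ∧
      (∀ (i : Bool) (a : ℕ → Bool), H (prependSymb i a) = G i (H a)) := by
  have hG' : ∀ i, LipschitzWith (1 / 2) (G i) :=
    fun i => .of_dist_le_mul fun p q => by simpa using hG i p q
  have hK : (1 / 2 : ℝ≥0) < 1 := by norm_num
  obtain ⟨z⟩ := ‹Nonempty X›
  obtain ⟨s, hsc, hsb, hz, hGs⟩ := exists_isClosed_isBounded_mapsTo hG' hK z
  have hxs : ∀ a k n, n ≤ k + 1 → x a k ∈ compWord G (prefixWord a n) '' s :=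
    fun a k n hn => IsFixedPt.mem_image_compWord hG' hK hsc hGs hz
      (List.ne_nil_of_length_pos (by simp)) (hx a k) (prefixWord_isPrefix a hn)
  have hcauchy := cauchySeq_of_mem_image_compWord hG' hK hsb hxs
  choose H hH using fun a => cauchySeq_tendsto_of_complete (hcauchy a)
  exact ⟨hcauchy, H, continuous_of_tendsto hG' hK hsb hxs hH, hH,
    apply_prependSymb_eq_of_tendsto hG' hK hsb hxs hH⟩
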